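/- (Lemma 2 on the Toda lattice.) Let a > 0, let u(n,r,θ) be smooth in (r,θ) for each n ∈ ℤ, let g : ℝ → ℂ be continuous and G : ℝ → ℂ an antiderivative of g (G′ = g), and assume the boundary condition u_r(n,a,θ) = 2n/a + g(θ) for all n ∈ ℤ and θ ∈ ℝ. If φ₁ : ℤ × ℝ → ℂ (differentiable in θ) satisfies equation (V1), then the function φ₃(n,θ) = e^{iaG(θ)}·φ₁(n,θ) satisfies equation (V3). -/

import Mathlib

/-- The radial partial derivative `u_r(n, a, θ)`. -/
noncomputable def uR (u : ℤ → ℝ → ℝ → ℂ) (a : ℝ) (n : ℤ) (θ : ℝ) : ℂ :=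
  deriv (fun r : ℝ => u n r θ) a

/-- The angular partial derivative `u_θ(n, a, θ)`. -/
noncomputable def uT (u : ℤ → ℝ → ℝ → ℂ) (a : ℝ) (n : ℤ) (θ : ℝ) : ℂ :=
  deriv (fun t : ℝ => u n a t) θ

/-- `ω(n, a, θ) = exp(u(n,a,θ) − u(n+1,a,θ))`. -/
noncomputable def om (u : ℤ → ℝ → ℝ → ℂ) (a : ℝ) (n : ℤ) (θ : ℝ) : ℂ :=
  Complex.exp (u n a θ - u (n + 1) a θ)

/-- `u(n,·,·)` is smooth in `(r,θ)` on `{r > 0}` for every `n`. -/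
def SmoothOnHalf (u : ℤ → ℝ → ℝ → ℂ) : Prop :=
  ∀ n : ℤ, ContDiffOn ℝ (⊤ : ℕ∞) (fun p : ℝ × ℝ => u n p.1 p.2) {p : ℝ × ℝ | 0 < p.1}

/-- Equation (V1): the θ-part, restricted to `r = a`, of the original Lax pair of the
polar two-dimensional Toda lattice. -/
def V1 (a : ℝ) (u : ℤ → ℝ → ℝ → ℂ) (φ : ℤ → ℝ → ℂ) : Prop :=
  ∀ (n : ℤ) (θ : ℝ), HasDerivAt (φ n)
    (Complex.I * a * Complex.exp (Complex.I * θ) / 2 * φ (n + 1) θ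
      - Complex.I * a / 2 * (uR u a n θ - Complex.I / a * uT u a n θ) * φ n θ
      + Complex.I * a * Complex.exp (-(Complex.I * θ)) / 2 * om u a (n - 1) θ * φ (n - 1) θ) θ

/-- Equation (V2): the θ-part, restricted to `r = a`, of the Lax pair obtained from the
reflection `θ → −θ`. -/
def V2 (a : ℝ) (u : ℤ → ℝ → ℝ → ℂ) (φ : ℤ → ℝ → ℂ) : Prop :=
  ∀ (n : ℤ) (θ : ℝ), HasDerivAt (φ n)
    (Complex.I * a * Complex.exp (-(Complex.I * θ)) / 2 * φ (n + 1) θ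
      - Complex.I * a / 2 * (uR u a n θ + Complex.I / a * uT u a n θ) * φ n θ
      + Complex.I * a * Complex.exp (Complex.I * θ) / 2 * om u a (n - 1) θ * φ (n - 1) θ) θ

/-- Equation (V3): the θ-part, restricted to `r = a`, of the Lax pair obtained from the
Kelvin transformation. -/
def V3 (a : ℝ) (u : ℤ → ℝ → ℝ → ℂ) (φ : ℤ → ℝ → ℂ) : Prop :=
  ∀ (n : ℤ) (θ : ℝ), HasDerivAt (φ n)
    (Complex.I * a * Complex.exp (Complex.I * θ) / 2 * φ (n + 1) θ
      - Complex.I * a / 2 * (-uR u a n θ + 4 * n / a - Complex.I / a * uT u a n θ) * φ n θ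
      + Complex.I * a * Complex.exp (-(Complex.I * θ)) / 2 * om u a (n - 1) θ * φ (n - 1) θ) θ

/-- Equation (V4): the θ-part, restricted to `r = a`, of the Lax pair obtained from the
reflection `ũ(n) = −u(−n)`. -/
def V4 (a : ℝ) (u : ℤ → ℝ → ℝ → ℂ) (φ : ℤ → ℝ → ℂ) : Prop :=
  ∀ (n : ℤ) (θ : ℝ), HasDerivAt (φ n)
    (Complex.I * a * Complex.exp (Complex.I * θ) / 2 * φ (n - 1) θ
      - Complex.I * a / 2 * (-uR u a n θ + Complex.I / a * uT u a n θ) * φ n θ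
      + Complex.I * a * Complex.exp (-(Complex.I * θ)) / 2 * om u a n θ * φ (n + 1) θ) θ

/-! Multiplying by the gauge factor `e^{iaG}` adds `iag` to the diagonal coefficient of a
θ-evolution equation, while the boundary condition `u_r = 2n/a + g` gives
`-u_r + 4n/a = u_r - 2g`, so the diagonal coefficients of (V3) and (V1) differ by exactly `iag`. -/

theorem HasDerivAt.cexp_mul_mul {𝕜 : Type*} [NontriviallyNormedField 𝕜] [NormedAlgebra 𝕜 ℂ]
    {G φ : 𝕜 → ℂ} {g d : ℂ} {x : 𝕜} (hG : HasDerivAt G g x) (c : ℂ) (hφ : HasDerivAt φ d x) :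
    HasDerivAt (fun t => Complex.exp (c * G t) * φ t)
      (Complex.exp (c * G x) * (d + c * g * φ x)) x :=
  (((hG.const_mul c).cexp).mul hφ).congr_deriv (by ring)

theorem toda_lemma2_general (a : ℝ) (u : ℤ → ℝ → ℝ → ℂ)
    (g G : ℝ → ℂ) (hG : ∀ θ : ℝ, HasDerivAt G (g θ) θ)
    (hbc : ∀ (n : ℤ) (θ : ℝ), uR u a n θ = 2 * n / a + g θ)
    (φ₁ : ℤ → ℝ → ℂ) (hφ₁ : V1 a u φ₁) :
    V3 a u (fun n θ => Complex.exp (Complex.I * a * G θ) * φ₁ n θ) := by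
  intro n θ
  have hdiag : -uR u a n θ + 4 * n / a = uR u a n θ - 2 * g θ := by
    rw [hbc]
    ring
  refine ((hG θ).cexp_mul_mul (Complex.I * a) (hφ₁ n θ)).congr_deriv ?_
  linear_combination ((Complex.I * a / 2) * φ₁ n θ * Complex.exp (Complex.I * a * G θ)) * hdiag

/-- Lemma 2 on the Toda lattice: under the boundary condition
`u_r(n,a,θ) = 2n/a + g(θ)`, if `φ₁` solves (V1) then
`φ₃(n,θ) = e^{iaG(θ)} φ₁(n,θ)` solves (V3), where `G′ = g`. -/
theorem toda_lemma2 (a : ℝ) (ha : 0 < a) (u : ℤ → ℝ → ℝ → ℂ) (hu : SmoothOnHalf u)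
    (g G : ℝ → ℂ) (hg : Continuous g) (hG : ∀ θ : ℝ, HasDerivAt G (g θ) θ)
    (hbc : ∀ (n : ℤ) (θ : ℝ), uR u a n θ = 2 * n / a + g θ)
    (φ₁ : ℤ → ℝ → ℂ) (hφ₁ : V1 a u φ₁) :
    V3 a u (fun n θ => Complex.exp (Complex.I * a * G θ) * φ₁ n θ) :=
  toda_lemma2_general a u g G hG hbc φ₁ hφ₁
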